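/- Consider the interval domain over ℤ ∪ {−∞, +∞} with the standard widening ([a,b] ▽ [c,d] extends a to −∞ if c < a and b to +∞ if d > b) and standard narrowing ([a,b] △ [c,d] replaces an infinite bound of [a,b] by the corresponding bound of [c,d]). Let ⊟ be the combined operator. Then ([0,0] ⊟ [0,1]) ⊟ [0,1] = [0,1], i.e., the widening to [0,∞] performed at the first application is immediately undone by the subsequent narrowing; consequently the sequence w₀ = [0,0], w_{i+1} = w_i ⊟ [0, i+1] is not eventually stationary. -/

import Mathlib

/-- An interval [lo, hi] with lo ∈ ℤ ∪ {−∞} and hi ∈ ℤ ∪ {+∞}. -/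
structure Itv where
  lo : WithBot ℤ
  hi : WithTop ℤ
  deriving DecidableEq

/-- Interval inclusion: `I.subset J` means I ⊆ J. -/
def Itv.subset (I J : Itv) : Prop := J.lo ≤ I.lo ∧ I.hi ≤ J.hi

/- Standard interval widening. -/
open Classical in
noncomputable def Itv.widen (I J : Itv) : Itv :=
  ⟨if I.lo ≤ J.lo then I.lo else ⊥, if J.hi ≤ I.hi then I.hi else ⊤⟩

/- Standard interval narrowing (for J ⊆ I): infinite bounds of I are
replaced by the corresponding bounds of J. -/
open Classical in
noncomputable def Itv.narrow (I J : Itv) : Itv :=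
  ⟨if I.lo = ⊥ then J.lo else I.lo, if I.hi = ⊤ then J.hi else I.hi⟩

/- Combined operator: narrow if J ⊆ I, widen otherwise. -/
open Classical in
noncomputable def Itv.box (I J : Itv) : Itv :=
  if J.subset I then I.narrow J else I.widen J

/-- The sequence w₀ = [0,0], w_{i+1} = w_i ⊟ [0, i+1]. -/
noncomputable def wseq : ℕ → Itv
  | 0 => ⟨((0 : ℤ) : WithBot ℤ), ((0 : ℤ) : WithTop ℤ)⟩
  | i+1 => (wseq i).box ⟨((0 : ℤ) : WithBot ℤ), (((i : ℤ) + 1) : WithTop ℤ)⟩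

/-! In `wseq` the upper bound alternates: the finite bound `2k` is widened to `+∞` because the
next bound `2k + 1` exceeds it, and `+∞` is then narrowed back to the finite bound `2k + 2`.
So the upper bounds of consecutive terms are never equal. -/

namespace Itv

theorem box_eq_of_hi_lt {a c : WithBot ℤ} {b d : WithTop ℤ} (hac : a ≤ c) (hbd : b < d) :
    box ⟨a, b⟩ ⟨c, d⟩ = ⟨a, ⊤⟩ := by
  simp [box, subset, widen, hac, hbd.not_ge]

theorem box_eq_of_hi_eq_top {a c : WithBot ℤ} {d : WithTop ℤ} (ha : a ≠ ⊥) (hac : a ≤ c) :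
    box ⟨a, ⊤⟩ ⟨c, d⟩ = ⟨a, d⟩ := by
  simp [box, subset, narrow, ha, hac]

end Itv

theorem wseq_succ_eq_top_of_eq {i : ℕ}
    (h : wseq i = ⟨((0 : ℤ) : WithBot ℤ), ((i : ℤ) : WithTop ℤ)⟩) :
    wseq (i + 1) = ⟨((0 : ℤ) : WithBot ℤ), ⊤⟩ := by
  rw [wseq, h]
  exact Itv.box_eq_of_hi_lt le_rfl (by norm_cast; omega)

theorem wseq_two_mul (k : ℕ) :
    wseq (2 * k) = ⟨((0 : ℤ) : WithBot ℤ), (((2 * k : ℕ) : ℤ) : WithTop ℤ)⟩ := by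
  induction k with
  | zero => rfl
  | succ k ih =>
    rw [show 2 * (k + 1) = 2 * k + 1 + 1 by ring, wseq, wseq_succ_eq_top_of_eq ih,
      Itv.box_eq_of_hi_eq_top WithBot.coe_ne_bot le_rfl]
    congr 1

theorem stmt14 :
    Itv.box ⟨((0 : ℤ) : WithBot ℤ), ((0 : ℤ) : WithTop ℤ)⟩
        ⟨((0 : ℤ) : WithBot ℤ), ((1 : ℤ) : WithTop ℤ)⟩ =
      ⟨((0 : ℤ) : WithBot ℤ), ⊤⟩ ∧
    Itv.box (Itv.box ⟨((0 : ℤ) : WithBot ℤ), ((0 : ℤ) : WithTop ℤ)⟩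
        ⟨((0 : ℤ) : WithBot ℤ), ((1 : ℤ) : WithTop ℤ)⟩)
        ⟨((0 : ℤ) : WithBot ℤ), ((1 : ℤ) : WithTop ℤ)⟩ =
      ⟨((0 : ℤ) : WithBot ℤ), ((1 : ℤ) : WithTop ℤ)⟩ ∧
    ¬ ∃ N : ℕ, ∀ i, N ≤ i → wseq (i+1) = wseq i := by
  have widen_step := Itv.box_eq_of_hi_lt (le_refl ((0 : ℤ) : WithBot ℤ))
    (WithTop.coe_lt_coe.mpr (zero_lt_one' ℤ))
  refine ⟨widen_step, ?_, ?_⟩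
  · rw [widen_step]
    exact Itv.box_eq_of_hi_eq_top WithBot.coe_ne_bot le_rfl
  · rintro ⟨N, hN⟩
    have h := hN (2 * N) (by omega)
    rw [wseq_succ_eq_top_of_eq (wseq_two_mul N), wseq_two_mul] at h
    exact WithTop.top_ne_coe (congrArg Itv.hi h)
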